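/- With the notation above, D^+ is an upper semicontinuous function and D^− is a lower semicontinuous function on X×[0,∞). -/

import Mathlib

open Filter Set
open scoped ENNReal NNReal Topology

variable {X : Type*}

/- The Hopf-Lax integrand `F(t,x,y) = f(y) + d(x,y)^p / (p t^(p-1))`. -/
noncomputable def HLF [MetricSpace X] (f : X → ℝ) (p t : ℝ) (x y : X) : ℝ :=
  f y + dist x y ^ p / (p * t ^ (p - 1))

/- `y : ℕ → X` is a minimizing sequence of `F(t,x,·)`. -/
def IsMinSeq [MetricSpace X] (f : X → ℝ) (p t : ℝ) (x : X) (y : ℕ → X) : Prop :=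
  Tendsto (fun n => HLF f p t x (y n)) atTop (nhds (⨅ z, HLF f p t x z))

/- `D^+(x,t)`: the supremum, over minimizing sequences, of `limsup_n d(x, y_n)`;
`D^+(x,0) = 0`. -/
noncomputable def Dplus [MetricSpace X] (f : X → ℝ) (p : ℝ) (x : X) (t : ℝ) : ℝ :=
  if t = 0 then 0 else
    sSup {L | ∃ y : ℕ → X, IsMinSeq f p t x y ∧
      L = limsup (fun n => dist x (y n)) atTop}

/- `D^-(x,t)`: the infimum, over minimizing sequences, of `liminf_n d(x, y_n)`;
`D^-(x,0) = 0`. -/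
noncomputable def Dminus [MetricSpace X] (f : X → ℝ) (p : ℝ) (x : X) (t : ℝ) : ℝ :=
  if t = 0 then 0 else
    sInf {L | ∃ y : ℕ → X, IsMinSeq f p t x y ∧
      L = liminf (fun n => dist x (y n)) atTop}

/- The Hopf-Lax semigroup `Q_t f(x)`, with `Q_0 f = f`. -/
noncomputable def QHL [MetricSpace X] (f : X → ℝ) (p t : ℝ) (x : X) : ℝ :=
  if t = 0 then f x else ⨅ y, HLF f p t x y

section Stmt2Aux

variable [MetricSpace X] {f : X → ℝ} {K : ℝ≥0} {p : ℝ}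

/-- A bound for the distance of near-minimizers. -/
noncomputable def HLbnd (p K s : ℝ) : ℝ :=
  (2 * (p * s ^ (p - 1)) * K) ^ (1 / (p - 1)) + (2 * (p * s ^ (p - 1))) ^ (1 / p)

lemma HLbnd_nonneg {K s : ℝ} (hp : 1 < p) (hK : 0 ≤ K) (hs : 0 ≤ s) : 0 ≤ HLbnd p K s := by
  have h0 : (0:ℝ) ≤ s ^ (p - 1) := Real.rpow_nonneg hs _
  have hp0 : (0:ℝ) ≤ p := by linarith
  have h1 : (0:ℝ) ≤ 2 * (p * s ^ (p - 1)) * K :=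
    mul_nonneg (mul_nonneg (by norm_num) (mul_nonneg hp0 h0)) hK
  have h2 : (0:ℝ) ≤ 2 * (p * s ^ (p - 1)) :=
    mul_nonneg (by norm_num) (mul_nonneg hp0 h0)
  exact add_nonneg (Real.rpow_nonneg h1 _) (Real.rpow_nonneg h2 _)

lemma HLbnd_mono (hp : 1 < p) {K s s' : ℝ} (hK : 0 ≤ K) (hs : 0 ≤ s) (hss : s ≤ s') :
    HLbnd p K s ≤ HLbnd p K s' := by
  have h0 : s ^ (p - 1) ≤ s' ^ (p - 1) := Real.rpow_le_rpow hs hss (by linarith)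
  have h0' : (0:ℝ) ≤ s ^ (p - 1) := Real.rpow_nonneg hs _
  have hp0 : (0:ℝ) ≤ p := by linarith
  have hb1 : 2 * (p * s ^ (p - 1)) * K ≤ 2 * (p * s' ^ (p - 1)) * K := by
    have := mul_le_mul_of_nonneg_left h0 hp0
    nlinarith
  have hb2 : 2 * (p * s ^ (p - 1)) ≤ 2 * (p * s' ^ (p - 1)) := by
    have := mul_le_mul_of_nonneg_left h0 hp0
    linarith
  have hnn1 : (0:ℝ) ≤ 2 * (p * s ^ (p - 1)) * K :=
    mul_nonneg (mul_nonneg (by norm_num) (mul_nonneg hp0 h0')) hK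
  have hnn2 : (0:ℝ) ≤ 2 * (p * s ^ (p - 1)) :=
    mul_nonneg (by norm_num) (mul_nonneg hp0 h0')
  exact add_le_add
    (Real.rpow_le_rpow hnn1 hb1 (le_of_lt (one_div_pos.mpr (by linarith))))
    (Real.rpow_le_rpow hnn2 hb2 (le_of_lt (one_div_pos.mpr (by linarith))))

lemma HLbnd_tendsto (hp : 1 < p) {K : ℝ} : Tendsto (fun s => HLbnd p K s) (nhds 0) (nhds 0) := by
  have c1 : Continuous fun s : ℝ => s ^ (p - 1) :=
    Continuous.rpow_const continuous_id (fun _ => Or.inr (by linarith))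
  have hcont : Continuous fun s : ℝ => HLbnd p K s := by
    unfold HLbnd
    apply Continuous.add
    · exact Continuous.rpow_const ((continuous_const.mul (continuous_const.mul c1)).mul
        continuous_const) (fun _ => Or.inr (le_of_lt (one_div_pos.mpr (by linarith))))
    · exact Continuous.rpow_const (continuous_const.mul (continuous_const.mul c1))
        (fun _ => Or.inr (le_of_lt (one_div_pos.mpr (by linarith))))
  have h2 : HLbnd p K 0 = 0 := by
    have e0 : p - 1 ≠ 0 := ne_of_gt (by linarith)
    have ep : p ≠ 0 := ne_of_gt (by linarith)
    simp [HLbnd, Real.zero_rpow e0, one_div, Real.zero_rpow (inv_ne_zero e0),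
      Real.zero_rpow (inv_ne_zero ep)]
  simpa [h2] using hcont.tendsto 0


lemma hlf_lower (hf : LipschitzWith K f) (x y : X) {t : ℝ} :
    f x - K * dist x y + dist x y ^ p / (p * t ^ (p - 1)) ≤ HLF f p t x y := by
  have h := hf.dist_le_mul x y
  rw [Real.dist_eq] at h
  have h2 := (abs_le.1 h).2
  unfold HLF
  linarith

lemma hlf_bddBelow (hf : LipschitzWith K f) (hp : 1 < p) {t : ℝ} (ht : 0 < t) (x : X) :
    BddBelow (Set.range fun y => HLF f p t x y) := by
  set c := p * t ^ (p - 1) with hc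
  have hc0 : 0 < c := mul_pos (by linarith) (Real.rpow_pos_of_pos ht _)
  set A := (c * ((K : ℝ) + 1)) ^ (1 / (p - 1)) with hA
  have hcK : (0:ℝ) ≤ c * ((K : ℝ) + 1) := by positivity
  have hA0 : 0 ≤ A := Real.rpow_nonneg hcK _
  refine ⟨f x - K * A, ?_⟩
  rintro v ⟨y, rfl⟩
  have hlow := hlf_lower (p := p) hf x y (t := t)
  rw [← hc] at hlow
  have hd0 : (0:ℝ) ≤ dist x y := dist_nonneg
  have hKA : (0:ℝ) ≤ (K : ℝ) * A := mul_nonneg K.coe_nonneg hA0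
  rcases le_or_gt (dist x y) A with hcase | hcase
  · have hnn : 0 ≤ dist x y ^ p / c := div_nonneg (Real.rpow_nonneg hd0 _) hc0.le
    have hKd : (K : ℝ) * dist x y ≤ K * A := mul_le_mul_of_nonneg_left hcase K.coe_nonneg
    simp only [mem_lowerBounds] at *
    linarith
  · have hdpos : 0 < dist x y := lt_of_le_of_lt hA0 hcase
    have h1 : c * ((K : ℝ) + 1) ≤ dist x y ^ (p - 1) := by
      have h := Real.rpow_le_rpow hA0 hcase.le (by linarith : (0:ℝ) ≤ p - 1)
      rwa [hA, one_div, Real.rpow_inv_rpow hcK (by linarith : p - 1 ≠ 0)] at h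
    have h2 : c * ((K : ℝ) + 1) * dist x y ≤ dist x y ^ p := by
      have e : dist x y ^ p = dist x y ^ (p - 1) * dist x y := by
        have h := Real.rpow_add hdpos (p - 1) 1
        rw [Real.rpow_one] at h
        rw [show p - 1 + 1 = p by ring] at h
        exact h
      rw [e]
      exact mul_le_mul_of_nonneg_right h1 hd0
    have h3 : ((K : ℝ) + 1) * dist x y ≤ dist x y ^ p / c := by
      rw [le_div_iff₀ hc0]
      calc ((K : ℝ) + 1) * dist x y * c = c * ((K : ℝ) + 1) * dist x y := by ring
        _ ≤ dist x y ^ p := h2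
    linarith

lemma hlf_inf_le (hf : LipschitzWith K f) (hp : 1 < p) {t : ℝ} (ht : 0 < t) (x : X) :
    (⨅ z, HLF f p t x z) ≤ f x := by
  have he : HLF f p t x x = f x := by
    unfold HLF
    rw [dist_self, Real.zero_rpow (by linarith : p ≠ 0)]
    simp
  calc (⨅ z, HLF f p t x z) ≤ HLF f p t x x := ciInf_le (hlf_bddBelow hf hp ht x) x
    _ = f x := he

lemma near_dist_le (hf : LipschitzWith K f) (hp : 1 < p) {t η : ℝ} (ht : 0 < t) (hη : 0 < η)
    (hη1 : η ≤ 1) {x y : X} (hy : HLF f p t x y ≤ (⨅ z, HLF f p t x z) + η) :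
    dist x y ≤ HLbnd p (K : ℝ) t := by
  set c := p * t ^ (p - 1) with hc
  have hc0 : 0 < c := mul_pos (by linarith) (Real.rpow_pos_of_pos ht _)
  have hd0 : (0:ℝ) ≤ dist x y := dist_nonneg
  have hKc : (0:ℝ) ≤ (K : ℝ) := K.coe_nonneg
  have hlow := hlf_lower (p := p) hf x y (t := t)
  rw [← hc] at hlow
  have h1 : f x - K * dist x y + dist x y ^ p / c ≤ f x + η := by
    have := hlf_inf_le hf hp ht x
    linarith
  have h2 : dist x y ^ p ≤ c * K * dist x y + c * η := by
    have hh : dist x y ^ p / c ≤ K * dist x y + η := by linarith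
    calc dist x y ^ p = dist x y ^ p / c * c := by field_simp
      _ ≤ ((K : ℝ) * dist x y + η) * c := mul_le_mul_of_nonneg_right hh hc0.le
      _ = c * K * dist x y + c * η := by ring
  have hb1 : (0:ℝ) ≤ (2 * c * K) ^ (1 / (p - 1)) := Real.rpow_nonneg (by positivity) _
  have hb2 : (0:ℝ) ≤ (2 * c) ^ (1 / p) := Real.rpow_nonneg (by positivity) _
  have hgoal : HLbnd p (K : ℝ) t = (2 * c * K) ^ (1 / (p - 1)) + (2 * c) ^ (1 / p) := by
    unfold HLbnd
    rw [← hc]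
  rcases le_total (c * K * dist x y) (c * η) with hcc | hcc
  · have h3 : dist x y ^ p ≤ 2 * c := by nlinarith
    have h4 : dist x y ≤ (2 * c) ^ (1 / p) := by
      have e : (dist x y ^ p) ^ p⁻¹ = dist x y := Real.rpow_rpow_inv hd0 (by linarith : p ≠ 0)
      calc dist x y = (dist x y ^ p) ^ p⁻¹ := e.symm
        _ ≤ (2 * c) ^ p⁻¹ :=
          Real.rpow_le_rpow (Real.rpow_nonneg hd0 _) h3 (le_of_lt (inv_pos.mpr (by linarith)))
        _ = (2 * c) ^ (1 / p) := by rw [one_div]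
    rw [hgoal]; linarith
  · rcases eq_or_lt_of_le hd0 with heq | hdpos
    · rw [← heq]
      exact HLbnd_nonneg hp hKc ht.le
    · have h3 : dist x y ^ p ≤ 2 * c * K * dist x y := by nlinarith
      have h4 : dist x y ^ (p - 1) ≤ 2 * c * K := by
        have e : dist x y ^ (p - 1) = dist x y ^ p / dist x y := by
          have h := Real.rpow_sub hdpos p 1
          rw [Real.rpow_one] at h
          exact h
        rw [e, div_le_iff₀ hdpos]
        exact h3
      have h5 : dist x y ≤ (2 * c * K) ^ (1 / (p - 1)) := by
        have e : (dist x y ^ (p - 1)) ^ (p - 1)⁻¹ = dist x y :=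
          Real.rpow_rpow_inv hd0 (by linarith : p - 1 ≠ 0)
        calc dist x y = (dist x y ^ (p - 1)) ^ (p - 1)⁻¹ := e.symm
          _ ≤ (2 * c * K) ^ (p - 1)⁻¹ :=
            Real.rpow_le_rpow (Real.rpow_nonneg hd0 _) h4 (le_of_lt (inv_pos.mpr (by linarith)))
          _ = (2 * c * K) ^ (1 / (p - 1)) := by rw [one_div]
      rw [hgoal]; linarith


lemma minseq_exists (hf : LipschitzWith K f) (hp : 1 < p) {t : ℝ} (ht : 0 < t) (x : X) :
    ∃ y : ℕ → X, IsMinSeq f p t x y := by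
  have : Nonempty X := ⟨x⟩
  have hbb := hlf_bddBelow hf hp ht x
  have hex : ∀ n : ℕ, ∃ z : X, HLF f p t x z < (⨅ z, HLF f p t x z) + 1 / (n + 1) := by
    intro n
    apply exists_lt_of_ciInf_lt
    have : (0:ℝ) < 1 / ((n:ℝ) + 1) := by positivity
    linarith
  choose y hy using hex
  refine ⟨y, ?_⟩
  unfold IsMinSeq
  have h1 : ∀ n, (⨅ z, HLF f p t x z) ≤ HLF f p t x (y n) := fun n => ciInf_le hbb _
  have h2 : Tendsto (fun n : ℕ => (⨅ z, HLF f p t x z) + 1 / ((n:ℝ) + 1)) atTop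
      (nhds ((⨅ z, HLF f p t x z) + 0)) :=
    tendsto_const_nhds.add tendsto_one_div_add_atTop_nhds_zero_nat
  rw [add_zero] at h2
  exact tendsto_of_tendsto_of_tendsto_of_le_of_le tendsto_const_nhds h2 h1 (fun n => (hy n).le)

lemma minseq_ev {t η : ℝ} {x : X} {y : ℕ → X} (hy : IsMinSeq f p t x y) (hη : 0 < η) :
    ∀ᶠ n in atTop, HLF f p t x (y n) ≤ (⨅ z, HLF f p t x z) + η := by
  have h := Tendsto.eventually_lt_const
    (show (⨅ z, HLF f p t x z) < (⨅ z, HLF f p t x z) + η by linarith) hy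
  exact h.mono fun n hn => hn.le

/-- The set of distances from `x` to `η`-near-minimizers. -/
def NearPts (f : X → ℝ) (p t : ℝ) (x : X) (η : ℝ) : Set ℝ :=
  (fun y => dist x y) '' {y | HLF f p t x y ≤ (⨅ z, HLF f p t x z) + η}

lemma nearPts_nonempty (hp : 1 < p) {t η : ℝ} (hη : 0 < η) (x : X) :
    (NearPts f p t x η).Nonempty := by
  have : Nonempty X := ⟨x⟩
  obtain ⟨z, hz⟩ := exists_lt_of_ciInf_lt
    (show (⨅ z, HLF f p t x z) < (⨅ z, HLF f p t x z) + η by linarith)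
  exact ⟨dist x z, z, hz.le, rfl⟩

lemma nearPts_bddBelow {t η : ℝ} {x : X} : BddBelow (NearPts f p t x η) := by
  refine ⟨0, ?_⟩
  rintro r ⟨z, _, rfl⟩
  exact dist_nonneg

lemma nearPts_le_bnd (hf : LipschitzWith K f) (hp : 1 < p) {t η : ℝ} (ht : 0 < t) (hη : 0 < η)
    (hη1 : η ≤ 1) {x : X} {r : ℝ} (hr : r ∈ NearPts f p t x η) : r ≤ HLbnd p (K : ℝ) t := by
  obtain ⟨z, hz, rfl⟩ := hr
  exact near_dist_le hf hp ht hη hη1 hz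

lemma nearPts_bddAbove (hf : LipschitzWith K f) (hp : 1 < p) {t η : ℝ} (ht : 0 < t) (hη : 0 < η)
    (hη1 : η ≤ 1) {x : X} : BddAbove (NearPts f p t x η) :=
  ⟨HLbnd p (K : ℝ) t, fun _ hr => nearPts_le_bnd hf hp ht hη hη1 hr⟩

/-- The set whose `sSup` is `Dplus`. -/
def DplusSet (f : X → ℝ) (p t : ℝ) (x : X) : Set ℝ :=
  {L | ∃ y : ℕ → X, IsMinSeq f p t x y ∧ L = limsup (fun n => dist x (y n)) atTop}

/-- The set whose `sInf` is `Dminus`. -/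
def DminusSet (f : X → ℝ) (p t : ℝ) (x : X) : Set ℝ :=
  {L | ∃ y : ℕ → X, IsMinSeq f p t x y ∧ L = liminf (fun n => dist x (y n)) atTop}

lemma minseq_dist_ev (hf : LipschitzWith K f) (hp : 1 < p) {t : ℝ} (ht : 0 < t) {x : X}
    {y : ℕ → X} (hy : IsMinSeq f p t x y) :
    ∀ᶠ n in atTop, dist x (y n) ≤ HLbnd p (K : ℝ) t :=
  (minseq_ev hy one_pos).mono fun n h => near_dist_le hf hp ht one_pos le_rfl h

lemma dplusSet_mem_le (hf : LipschitzWith K f) (hp : 1 < p) {t η : ℝ} (ht : 0 < t) {x : X}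
    {L : ℝ} (hL : L ∈ DplusSet f p t x) (hη : 0 < η) (hη1 : η ≤ 1) :
    L ≤ sSup (NearPts f p t x η) := by
  obtain ⟨y, hy, rfl⟩ := hL
  apply limsup_le_of_le
  · exact (isBoundedUnder_of_eventually_ge
      (Eventually.of_forall fun n => dist_nonneg)).isCoboundedUnder_le
  · exact (minseq_ev hy hη).mono fun n h =>
      le_csSup (nearPts_bddAbove hf hp ht hη hη1) ⟨y n, h, rfl⟩

lemma dminusSet_mem_ge (hf : LipschitzWith K f) (hp : 1 < p) {t η : ℝ} (ht : 0 < t) {x : X}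
    {L : ℝ} (hL : L ∈ DminusSet f p t x) (hη : 0 < η) :
    sInf (NearPts f p t x η) ≤ L := by
  obtain ⟨y, hy, rfl⟩ := hL
  apply le_liminf_of_le
  · exact (isBoundedUnder_of_eventually_le (minseq_dist_ev hf hp ht hy)).isCoboundedUnder_ge
  · exact (minseq_ev hy hη).mono fun n h => csInf_le nearPts_bddBelow ⟨y n, h, rfl⟩

lemma dminusSet_mem_nonneg (hf : LipschitzWith K f) (hp : 1 < p) {t : ℝ} (ht : 0 < t) {x : X}
    {L : ℝ} (hL : L ∈ DminusSet f p t x) : 0 ≤ L := by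
  obtain ⟨y, hy, rfl⟩ := hL
  apply le_liminf_of_le
  · exact (isBoundedUnder_of_eventually_le (minseq_dist_ev hf hp ht hy)).isCoboundedUnder_ge
  · exact Eventually.of_forall fun n => dist_nonneg


lemma Dplus_eq {x : X} {t : ℝ} (ht : t ≠ 0) : Dplus f p x t = sSup (DplusSet f p t x) := by
  simp only [Dplus, DplusSet, if_neg ht]

lemma Dminus_eq {x : X} {t : ℝ} (ht : t ≠ 0) : Dminus f p x t = sInf (DminusSet f p t x) := by
  simp only [Dminus, DminusSet, if_neg ht]

lemma dplusSet_nonempty (hf : LipschitzWith K f) (hp : 1 < p) {t : ℝ} (ht : 0 < t) (x : X) :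
    (DplusSet f p t x).Nonempty := by
  obtain ⟨y, hy⟩ := minseq_exists hf hp ht x
  exact ⟨_, y, hy, rfl⟩

lemma dminusSet_nonempty (hf : LipschitzWith K f) (hp : 1 < p) {t : ℝ} (ht : 0 < t) (x : X) :
    (DminusSet f p t x).Nonempty := by
  obtain ⟨y, hy⟩ := minseq_exists hf hp ht x
  exact ⟨_, y, hy, rfl⟩

lemma Dplus_le_nearSup (hf : LipschitzWith K f) (hp : 1 < p) {t η : ℝ} (ht : 0 < t) (x : X)
    (hη : 0 < η) (hη1 : η ≤ 1) : Dplus f p x t ≤ sSup (NearPts f p t x η) := by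
  rw [Dplus_eq (ne_of_gt ht)]
  exact csSup_le (dplusSet_nonempty hf hp ht x) fun L hL => dplusSet_mem_le hf hp ht hL hη hη1

lemma Dplus_le_bnd (hf : LipschitzWith K f) (hp : 1 < p) {t : ℝ} (ht : 0 < t) (x : X) :
    Dplus f p x t ≤ HLbnd p (K : ℝ) t :=
  le_trans (Dplus_le_nearSup hf hp ht x one_pos le_rfl)
    (csSup_le (nearPts_nonempty hp one_pos x) fun _ hr => nearPts_le_bnd hf hp ht one_pos le_rfl hr)

lemma nearInf_le_Dminus (hf : LipschitzWith K f) (hp : 1 < p) {t η : ℝ} (ht : 0 < t) (x : X)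
    (hη : 0 < η) : sInf (NearPts f p t x η) ≤ Dminus f p x t := by
  rw [Dminus_eq (ne_of_gt ht)]
  exact le_csInf (dminusSet_nonempty hf hp ht x) fun L hL => dminusSet_mem_ge hf hp ht hL hη

lemma Dminus_nonneg (hf : LipschitzWith K f) (hp : 1 < p) {t : ℝ} (ht : 0 < t) (x : X) :
    0 ≤ Dminus f p x t := by
  rw [Dminus_eq (ne_of_gt ht)]
  exact le_csInf (dminusSet_nonempty hf hp ht x) fun L hL => dminusSet_mem_nonneg hf hp ht hL


lemma exists_eta_plus (hf : LipschitzWith K f) (hp : 1 < p) {t L : ℝ} (ht : 0 < t) (x : X)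
    (hL : Dplus f p x t < L) : ∃ η, 0 < η ∧ η ≤ 1 ∧ sSup (NearPts f p t x η) < L := by
  by_contra hcon
  push_neg at hcon
  have hbb := hlf_bddBelow hf hp ht x
  have hfrac : ∀ n : ℕ, 0 < 1 / ((n:ℝ) + 1) ∧ 1 / ((n:ℝ) + 1) ≤ 1 := by
    intro n
    constructor
    · positivity
    · rw [div_le_one (by positivity)]
      have : (0:ℝ) ≤ (n:ℝ) := Nat.cast_nonneg n
      linarith
  have key : ∀ n : ℕ, ∃ z : X,
      HLF f p t x z ≤ (⨅ z, HLF f p t x z) + 1 / ((n:ℝ) + 1) ∧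
      L - 1 / ((n:ℝ) + 1) < dist x z := by
    intro n
    obtain ⟨hn, hn1⟩ := hfrac n
    have h1 : L - 1 / ((n:ℝ) + 1) < sSup (NearPts f p t x (1 / ((n:ℝ) + 1))) := by
      have := hcon _ hn hn1
      linarith
    obtain ⟨r, hr, hlt⟩ := exists_lt_of_lt_csSup (nearPts_nonempty hp hn x) h1
    obtain ⟨z, hz, rfl⟩ := hr
    exact ⟨z, hz, hlt⟩
  choose y hy1 hy2 using key
  have hms : IsMinSeq f p t x y := by
    unfold IsMinSeq
    have h1 : ∀ n, (⨅ z, HLF f p t x z) ≤ HLF f p t x (y n) := fun n => ciInf_le hbb _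
    have h2 : Tendsto (fun n : ℕ => (⨅ z, HLF f p t x z) + 1 / ((n:ℝ) + 1)) atTop
        (nhds ((⨅ z, HLF f p t x z) + 0)) :=
      tendsto_const_nhds.add tendsto_one_div_add_atTop_nhds_zero_nat
    rw [add_zero] at h2
    exact tendsto_of_tendsto_of_tendsto_of_le_of_le tendsto_const_nhds h2 h1 hy1
  have hub : limsup (fun n => dist x (y n)) atTop ≤ Dplus f p x t := by
    rw [Dplus_eq (ne_of_gt ht)]
    refine le_csSup ?_ ⟨y, hms, rfl⟩
    refine ⟨HLbnd p (K : ℝ) t, ?_⟩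
    intro L' hL'
    exact le_trans (dplusSet_mem_le hf hp ht hL' one_pos le_rfl)
      (csSup_le (nearPts_nonempty hp one_pos x)
        fun _ hr => nearPts_le_bnd hf hp ht one_pos le_rfl hr)
  have hlb : L ≤ limsup (fun n => dist x (y n)) atTop := by
    apply le_limsup_of_le
    · refine isBoundedUnder_of_eventually_le (a := HLbnd p (K : ℝ) t) ?_
      refine Eventually.of_forall fun n => ?_
      exact near_dist_le hf hp ht (hfrac n).1 (hfrac n).2 (hy1 n)
    · intro b hb
      refine le_of_forall_pos_le_add fun ε hε => ?_
      have h1 : ∀ᶠ n : ℕ in atTop, 1 / ((n:ℝ) + 1) < ε :=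
        Tendsto.eventually_lt_const hε tendsto_one_div_add_atTop_nhds_zero_nat
      obtain ⟨n, hbn, hεn⟩ := (hb.and h1).exists
      have := hy2 n
      linarith
  linarith

lemma exists_eta_minus (hf : LipschitzWith K f) (hp : 1 < p) {t L : ℝ} (ht : 0 < t) (x : X)
    (hL : L < Dminus f p x t) : ∃ η, 0 < η ∧ η ≤ 1 ∧ L < sInf (NearPts f p t x η) := by
  by_contra hcon
  push_neg at hcon
  have hbb := hlf_bddBelow hf hp ht x
  have hfrac : ∀ n : ℕ, 0 < 1 / ((n:ℝ) + 1) ∧ 1 / ((n:ℝ) + 1) ≤ 1 := by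
    intro n
    constructor
    · positivity
    · rw [div_le_one (by positivity)]
      have : (0:ℝ) ≤ (n:ℝ) := Nat.cast_nonneg n
      linarith
  have key : ∀ n : ℕ, ∃ z : X,
      HLF f p t x z ≤ (⨅ z, HLF f p t x z) + 1 / ((n:ℝ) + 1) ∧
      dist x z < L + 1 / ((n:ℝ) + 1) := by
    intro n
    obtain ⟨hn, hn1⟩ := hfrac n
    have h1 : sInf (NearPts f p t x (1 / ((n:ℝ) + 1))) < L + 1 / ((n:ℝ) + 1) := by
      have := hcon _ hn hn1
      linarith
    obtain ⟨r, hr, hlt⟩ := exists_lt_of_csInf_lt (nearPts_nonempty hp hn x) h1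
    obtain ⟨z, hz, rfl⟩ := hr
    exact ⟨z, hz, hlt⟩
  choose y hy1 hy2 using key
  have hms : IsMinSeq f p t x y := by
    unfold IsMinSeq
    have h1 : ∀ n, (⨅ z, HLF f p t x z) ≤ HLF f p t x (y n) := fun n => ciInf_le hbb _
    have h2 : Tendsto (fun n : ℕ => (⨅ z, HLF f p t x z) + 1 / ((n:ℝ) + 1)) atTop
        (nhds ((⨅ z, HLF f p t x z) + 0)) :=
      tendsto_const_nhds.add tendsto_one_div_add_atTop_nhds_zero_nat
    rw [add_zero] at h2
    exact tendsto_of_tendsto_of_tendsto_of_le_of_le tendsto_const_nhds h2 h1 hy1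
  have hub : Dminus f p x t ≤ liminf (fun n => dist x (y n)) atTop := by
    rw [Dminus_eq (ne_of_gt ht)]
    refine csInf_le ?_ ⟨y, hms, rfl⟩
    exact ⟨0, fun L' hL' => dminusSet_mem_nonneg hf hp ht hL'⟩
  have hlb : liminf (fun n => dist x (y n)) atTop ≤ L := by
    apply liminf_le_of_le
    · exact isBoundedUnder_of_eventually_ge (Eventually.of_forall fun n => dist_nonneg)
    · intro b hb
      refine le_of_forall_pos_le_add fun ε hε => ?_
      have h1 : ∀ᶠ n : ℕ in atTop, 1 / ((n:ℝ) + 1) < ε :=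
        Tendsto.eventually_lt_const hε tendsto_one_div_add_atTop_nhds_zero_nat
      obtain ⟨n, hbn, hεn⟩ := (hb.and h1).exists
      have := hy2 n
      linarith
  linarith


lemma hlf_close (hp : 1 < p) {t ε : ℝ} (ht : 0 < t) (hε : 0 < ε) (B : ℝ) :
    ∃ δ, 0 < δ ∧ δ ≤ t / 2 ∧ δ ≤ 1 ∧ ∀ (x x' : X) (t' : ℝ) (y : X), dist x x' < δ →
      |t' - t| < δ → dist x' y ≤ B → dist x y ≤ B →
      |HLF f p t' x' y - HLF f p t x y| ≤ ε := by
  set G : ℝ × ℝ → ℝ := fun q => q.2 ^ p / (p * q.1 ^ (p - 1)) with hG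
  set S : Set (ℝ × ℝ) := Set.Icc (t / 2) (3 * t / 2) ×ˢ Set.Icc 0 B with hS
  have hcomp : IsCompact S := isCompact_Icc.prod isCompact_Icc
  have hcont : ContinuousOn G S := by
    apply ContinuousOn.div
    · exact (continuous_snd.rpow_const fun _ => Or.inr (by linarith)).continuousOn
    · exact (continuous_const.mul (continuous_fst.rpow_const fun _ => Or.inr (by linarith))).continuousOn
    · rintro ⟨s, u⟩ ⟨hs, _⟩
      have hs0 : 0 < s := lt_of_lt_of_le (by linarith) hs.1
      exact ne_of_gt (mul_pos (by linarith) (Real.rpow_pos_of_pos hs0 _))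
  have huc := hcomp.uniformContinuousOn_of_continuous hcont
  rw [Metric.uniformContinuousOn_iff] at huc
  obtain ⟨δ₀, hδ₀, hucd⟩ := huc ε hε
  refine ⟨min δ₀ (min (t / 2) 1), ?_, ?_, ?_, ?_⟩
  · exact lt_min hδ₀ (lt_min (by linarith) one_pos)
  · exact le_trans (min_le_right _ _) (min_le_left _ _)
  · exact le_trans (min_le_right _ _) (min_le_right _ _)
  · intro x x' t' y h1 h2 h3 h4
    have hδδ : min δ₀ (min (t / 2) 1) ≤ δ₀ := min_le_left _ _
    have hδt : min δ₀ (min (t / 2) 1) ≤ t / 2 := le_trans (min_le_right _ _) (min_le_left _ _)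
    have habs := abs_lt.1 h2
    have hq1 : (t', dist x' y) ∈ S := by
      refine ⟨⟨by linarith, by linarith⟩, ⟨dist_nonneg, h3⟩⟩
    have hq2 : (t, dist x y) ∈ S := by
      refine ⟨⟨by linarith, by linarith⟩, ⟨dist_nonneg, h4⟩⟩
    have hdist : dist (t', dist x' y) (t, dist x y) < δ₀ := by
      rw [Prod.dist_eq]
      apply max_lt
      · rw [Real.dist_eq]
        exact lt_of_lt_of_le h2 hδδ
      · rw [Real.dist_eq]
        refine lt_of_le_of_lt (abs_dist_sub_le x' x y) ?_
        rw [dist_comm x' x]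
        exact lt_of_lt_of_le h1 hδδ
    have hGG := hucd _ hq1 _ hq2 hdist
    rw [Real.dist_eq] at hGG
    have he : HLF f p t' x' y - HLF f p t x y = G (t', dist x' y) - G (t, dist x y) := by
      simp only [HLF, hG]
      ring
    rw [he]
    exact le_of_lt hGG

lemma q_close (hf : LipschitzWith K f) (hp : 1 < p) {t ε : ℝ} (ht : 0 < t) (hε : 0 < ε)
    (hε1 : ε ≤ 1) :
    ∃ δ, 0 < δ ∧ δ ≤ t / 2 ∧ δ ≤ 1 ∧ ∀ (x x' : X) (t' : ℝ), dist x x' < δ → |t' - t| < δ →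
      0 < t' ∧ t' ≤ 2 * t ∧
      (∀ y : X, dist x' y ≤ HLbnd p (K : ℝ) (2 * t) + 1 →
        dist x y ≤ HLbnd p (K : ℝ) (2 * t) + 1 →
        |HLF f p t' x' y - HLF f p t x y| ≤ ε) ∧
      |(⨅ z, HLF f p t' x' z) - (⨅ z, HLF f p t x z)| ≤ 2 * ε := by
  obtain ⟨δ, hδ0, hδt, hδ1, hδ⟩ := hlf_close (f := f) hp ht hε (HLbnd p (K : ℝ) (2 * t) + 1)
  refine ⟨δ, hδ0, hδt, hδ1, ?_⟩
  intro x x' t' h1 h2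
  have hne : Nonempty X := ⟨x⟩
  have habs := abs_lt.1 h2
  have ht'0 : 0 < t' := by linarith
  have ht'2 : t' ≤ 2 * t := by linarith
  have hmono : HLbnd p (K : ℝ) t' ≤ HLbnd p (K : ℝ) (2 * t) :=
    HLbnd_mono hp K.coe_nonneg ht'0.le ht'2
  have hmonot : HLbnd p (K : ℝ) t ≤ HLbnd p (K : ℝ) (2 * t) :=
    HLbnd_mono hp K.coe_nonneg ht.le (by linarith)
  have hC : ∀ y : X, dist x' y ≤ HLbnd p (K : ℝ) (2 * t) + 1 →
      dist x y ≤ HLbnd p (K : ℝ) (2 * t) + 1 →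
      |HLF f p t' x' y - HLF f p t x y| ≤ ε := fun y => hδ x x' t' y h1 h2
  refine ⟨ht'0, ht'2, hC, ?_⟩
  have hbbt := hlf_bddBelow hf hp ht x
  have hbbt' := hlf_bddBelow hf hp ht'0 x'
  have dir1 : (⨅ z, HLF f p t' x' z) ≤ (⨅ z, HLF f p t x z) + 2 * ε := by
    obtain ⟨y₀, hy₀⟩ := exists_lt_of_ciInf_lt
      (show (⨅ z, HLF f p t x z) < (⨅ z, HLF f p t x z) + ε by linarith)
    have hd0 : dist x y₀ ≤ HLbnd p (K : ℝ) t := near_dist_le hf hp ht hε hε1 hy₀.le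
    have hd0' : dist x' y₀ ≤ HLbnd p (K : ℝ) (2 * t) + 1 := by
      calc dist x' y₀ ≤ dist x' x + dist x y₀ := dist_triangle _ _ _
        _ ≤ HLbnd p (K : ℝ) (2 * t) + 1 := by
            rw [dist_comm x' x]
            linarith
    have hcl := hC y₀ hd0' (by linarith)
    have h3 := (abs_le.1 hcl).2
    calc (⨅ z, HLF f p t' x' z) ≤ HLF f p t' x' y₀ := ciInf_le hbbt' y₀
      _ ≤ (⨅ z, HLF f p t x z) + 2 * ε := by linarith
  have dir2 : (⨅ z, HLF f p t x z) ≤ (⨅ z, HLF f p t' x' z) + 2 * ε := by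
    obtain ⟨y₁, hy₁⟩ := exists_lt_of_ciInf_lt
      (show (⨅ z, HLF f p t' x' z) < (⨅ z, HLF f p t' x' z) + ε by linarith)
    have hd1 : dist x' y₁ ≤ HLbnd p (K : ℝ) t' := near_dist_le hf hp ht'0 hε hε1 hy₁.le
    have hd1' : dist x y₁ ≤ HLbnd p (K : ℝ) (2 * t) + 1 := by
      calc dist x y₁ ≤ dist x x' + dist x' y₁ := dist_triangle _ _ _
        _ ≤ HLbnd p (K : ℝ) (2 * t) + 1 := by linarith
    have hcl := hC y₁ (by linarith) hd1'
    have h3 := (abs_le.1 hcl).1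
    calc (⨅ z, HLF f p t x z) ≤ HLF f p t x y₁ := ciInf_le hbbt y₁
      _ ≤ (⨅ z, HLF f p t' x' z) + 2 * ε := by linarith
  rw [abs_le]
  constructor <;> linarith

end Stmt2Aux

/- **Statement 2** (Semicontinuity of `D^±`). `D^+` is upper semicontinuous and
`D^-` is lower semicontinuous on `X × [0,∞)`. -/
theorem stmt2 [MetricSpace X] (f : X → ℝ) (K : ℝ≥0) (hf : LipschitzWith K f)
    (p : ℝ) (hp : 1 < p) :
    UpperSemicontinuousOn (fun z : X × ℝ => Dplus f p z.1 z.2) (univ ×ˢ Ici 0) ∧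
    LowerSemicontinuousOn (fun z : X × ℝ => Dminus f p z.1 z.2) (univ ×ˢ Ici 0) := by
  have hK : (0:ℝ) ≤ (K : ℝ) := K.coe_nonneg
  constructor
  · -- Upper semicontinuity of D^+
    rintro ⟨x, t⟩ hxt L hL
    have ht0 : (0:ℝ) ≤ t := hxt.2
    have hL' : Dplus f p x t < L := hL
    rcases eq_or_lt_of_le ht0 with h0 | htpos
    · -- boundary case t = 0
      have hL0 : (0:ℝ) < L := by
        have : Dplus f p x t = 0 := by rw [← h0]; simp [Dplus]
        linarith [hL', this]
      rw [← h0]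
      rw [nhdsWithin_prod_eq, nhdsWithin_univ]
      have hev1 : ∀ᶠ s in nhdsWithin (0:ℝ) (Ici 0), HLbnd p (K : ℝ) s < L :=
        Tendsto.eventually_lt_const hL0 ((HLbnd_tendsto hp).mono_left nhdsWithin_le_nhds)
      have hev2 : ∀ᶠ s in nhdsWithin (0:ℝ) (Ici 0), s ∈ Ici (0:ℝ) := eventually_mem_nhdsWithin
      filter_upwards [Eventually.prod_inr hev1 (nhds x), Eventually.prod_inr hev2 (nhds x)]
        with z hz1 hz2
      rcases eq_or_lt_of_le (Set.mem_Ici.mp hz2) with hz0 | hzpos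
      · show Dplus f p z.1 z.2 < L
        rw [← hz0]
        simpa [Dplus] using hL0
      · calc Dplus f p z.1 z.2 ≤ HLbnd p (K : ℝ) z.2 := Dplus_le_bnd hf hp hzpos z.1
          _ < L := hz1
    · -- interior case 0 < t
      obtain ⟨η, hη0, hη1, hSη⟩ := exists_eta_plus hf hp htpos x hL'
      have hε0 : 0 < η / 4 := by linarith
      have hε1 : η / 4 ≤ 1 := by linarith
      obtain ⟨δ₁, hδ₁0, hδ₁t, hδ₁1, hδ₁⟩ := q_close hf hp htpos hε0 hε1
      set Sη := sSup (NearPts f p t x η) with hSdef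
      set δ := min δ₁ ((L - Sη) / 2) with hδdef
      have hδ0 : 0 < δ := lt_min hδ₁0 (by linarith)
      have hδδ₁ : δ ≤ δ₁ := min_le_left _ _
      have hδL : δ ≤ (L - Sη) / 2 := min_le_right _ _
      have hball : ∀ᶠ z : X × ℝ in nhdsWithin (x, t) (univ ×ˢ Ici 0), dist z (x, t) < δ :=
        eventually_nhdsWithin_of_eventually_nhds
          (Metric.eventually_nhds_iff.2 ⟨δ, hδ0, fun y hy => hy⟩)
      filter_upwards [hball] with z hz
      obtain ⟨x', t'⟩ := z
      rw [Prod.dist_eq, max_lt_iff] at hz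
      obtain ⟨hzx, hzt⟩ := hz
      have h1 : dist x x' < δ₁ := by
        rw [dist_comm]
        exact lt_of_lt_of_le hzx hδδ₁
      have h2 : |t' - t| < δ₁ := by
        rw [Real.dist_eq] at hzt
        exact lt_of_lt_of_le hzt hδδ₁
      obtain ⟨ht'0, ht'2, hC, hQ⟩ := hδ₁ x x' t' h1 h2
      show Dplus f p x' t' < L
      have step1 : Dplus f p x' t' ≤ sSup (NearPts f p t' x' (η / 4)) :=
        Dplus_le_nearSup hf hp ht'0 x' hε0 hε1
      have step2 : sSup (NearPts f p t' x' (η / 4)) ≤ Sη + δ := by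
        apply csSup_le (nearPts_nonempty hp hε0 x')
        rintro r ⟨y, hy, rfl⟩
        have hdy : dist x' y ≤ HLbnd p (K : ℝ) t' := near_dist_le hf hp ht'0 hε0 hε1 hy
        have hmono' : HLbnd p (K : ℝ) t' ≤ HLbnd p (K : ℝ) (2 * t) :=
          HLbnd_mono hp hK ht'0.le ht'2
        have hdx : dist x y ≤ HLbnd p (K : ℝ) (2 * t) + 1 := by
          calc dist x y ≤ dist x x' + dist x' y := dist_triangle _ _ _
            _ ≤ HLbnd p (K : ℝ) (2 * t) + 1 := by linarith
        have hclose := hC y (by linarith) hdx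
        have hQ2 := (abs_le.1 hQ).2
        have hc2 := (abs_le.1 hclose).1
        have hmem : dist x y ∈ NearPts f p t x η := by
          refine ⟨y, ?_, rfl⟩
          have hyy : HLF f p t' x' y ≤ (⨅ z, HLF f p t' x' z) + η / 4 := hy
          have : HLF f p t x y ≤ HLF f p t' x' y + η / 4 := by linarith
          calc HLF f p t x y ≤ (⨅ z, HLF f p t' x' z) + η / 2 := by linarith
            _ ≤ (⨅ z, HLF f p t x z) + η := by linarith
        have hle : dist x y ≤ Sη := le_csSup (nearPts_bddAbove hf hp htpos hη0 hη1) hmem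
        have hxx' : dist x' x < δ := hzx
        calc dist x' y ≤ dist x' x + dist x y := dist_triangle _ _ _
          _ ≤ Sη + δ := by linarith
      linarith
  · -- Lower semicontinuity of D^-
    rintro ⟨x, t⟩ hxt L hL
    have ht0 : (0:ℝ) ≤ t := hxt.2
    have hL' : L < Dminus f p x t := hL
    rcases eq_or_lt_of_le ht0 with h0 | htpos
    · -- boundary case t = 0
      have hL0 : L < 0 := by
        have : Dminus f p x t = 0 := by rw [← h0]; simp [Dminus]
        linarith [hL', this]
      have hev2 : ∀ᶠ z : X × ℝ in nhdsWithin (x, t) (univ ×ˢ Ici 0), z ∈ univ ×ˢ Ici (0:ℝ) :=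
        eventually_mem_nhdsWithin
      filter_upwards [hev2] with z hz2
      have hz0 : (0:ℝ) ≤ z.2 := hz2.2
      show L < Dminus f p z.1 z.2
      rcases eq_or_lt_of_le hz0 with hzz | hzpos
      · rw [← hzz]
        simpa [Dminus] using hL0
      · calc L < 0 := hL0
          _ ≤ Dminus f p z.1 z.2 := Dminus_nonneg hf hp hzpos z.1
    · -- interior case 0 < t
      obtain ⟨η, hη0, hη1, hIη⟩ := exists_eta_minus hf hp htpos x hL'
      have hε0 : 0 < η / 4 := by linarith
      have hε1 : η / 4 ≤ 1 := by linarith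
      obtain ⟨δ₁, hδ₁0, hδ₁t, hδ₁1, hδ₁⟩ := q_close hf hp htpos hε0 hε1
      set Iη := sInf (NearPts f p t x η) with hIdef
      set δ := min δ₁ ((Iη - L) / 2) with hδdef
      have hδ0 : 0 < δ := lt_min hδ₁0 (by linarith)
      have hδδ₁ : δ ≤ δ₁ := min_le_left _ _
      have hδL : δ ≤ (Iη - L) / 2 := min_le_right _ _
      have hball : ∀ᶠ z : X × ℝ in nhdsWithin (x, t) (univ ×ˢ Ici 0), dist z (x, t) < δ :=
        eventually_nhdsWithin_of_eventually_nhds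
          (Metric.eventually_nhds_iff.2 ⟨δ, hδ0, fun y hy => hy⟩)
      filter_upwards [hball] with z hz
      obtain ⟨x', t'⟩ := z
      rw [Prod.dist_eq, max_lt_iff] at hz
      obtain ⟨hzx, hzt⟩ := hz
      have h1 : dist x x' < δ₁ := by
        rw [dist_comm]
        exact lt_of_lt_of_le hzx hδδ₁
      have h2 : |t' - t| < δ₁ := by
        rw [Real.dist_eq] at hzt
        exact lt_of_lt_of_le hzt hδδ₁
      obtain ⟨ht'0, ht'2, hC, hQ⟩ := hδ₁ x x' t' h1 h2
      show L < Dminus f p x' t'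
      have step1 : sInf (NearPts f p t' x' (η / 4)) ≤ Dminus f p x' t' :=
        nearInf_le_Dminus hf hp ht'0 x' hε0
      have step2 : Iη - δ ≤ sInf (NearPts f p t' x' (η / 4)) := by
        apply le_csInf (nearPts_nonempty hp hε0 x')
        rintro r ⟨y, hy, rfl⟩
        have hdy : dist x' y ≤ HLbnd p (K : ℝ) t' := near_dist_le hf hp ht'0 hε0 hε1 hy
        have hmono' : HLbnd p (K : ℝ) t' ≤ HLbnd p (K : ℝ) (2 * t) :=
          HLbnd_mono hp hK ht'0.le ht'2
        have hdx : dist x y ≤ HLbnd p (K : ℝ) (2 * t) + 1 := by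
          calc dist x y ≤ dist x x' + dist x' y := dist_triangle _ _ _
            _ ≤ HLbnd p (K : ℝ) (2 * t) + 1 := by linarith
        have hclose := hC y (by linarith) hdx
        have hQ2 := (abs_le.1 hQ).2
        have hc2 := (abs_le.1 hclose).1
        have hmem : dist x y ∈ NearPts f p t x η := by
          refine ⟨y, ?_, rfl⟩
          have hyy : HLF f p t' x' y ≤ (⨅ z, HLF f p t' x' z) + η / 4 := hy
          have : HLF f p t x y ≤ HLF f p t' x' y + η / 4 := by linarith
          calc HLF f p t x y ≤ (⨅ z, HLF f p t' x' z) + η / 2 := by linarith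
            _ ≤ (⨅ z, HLF f p t x z) + η := by linarith
        have hge : Iη ≤ dist x y := csInf_le nearPts_bddBelow hmem
        have htri : dist x y ≤ dist x x' + dist x' y := dist_triangle _ _ _
        have hxx : dist x x' < δ := by rw [dist_comm]; exact hzx
        have hxx2 : dist x x' = dist x' x := dist_comm x x'
        linarith
      linarith
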